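/- The total number of ties, summed over all contained k-Naples (m,n)-parking functions, equals the total number of ties summed over all classical (m,n)-parking functions: Σ_{f ∈ B(m,n;k)} ties(f) = Σ_{g ∈ PF(m,n)} ties(g), for all 1 ≤ m ≤ n and 0 ≤ k ≤ n-1. -/

import Mathlib

/-- The first unoccupied spot `s` with `p ≤ s ≤ n`, if any. -/
def forwardSpot (n : ℕ) (occ : Finset ℕ) (p : ℕ) : Option ℕ :=
  (List.range' p (n + 1 - p)).find? (fun s => decide (s ∉ occ))

/-- Classical (forward-only) parking process: cars park one by one, each at the
first free spot `≥` its preference; returns the final occupied set if all park. -/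
def classicalPark (n : ℕ) : List ℕ → Finset ℕ → Option (Finset ℕ)
  | [], occ => some occ
  | p :: rest, occ =>
    match forwardSpot n occ p with
    | none => none
    | some s => classicalPark n rest (insert s occ)

/-- Backward candidates `p-1, p-2, …, p-k` that are at least `1`. -/
def backwardCandidates (k p : ℕ) : List ℕ :=
  ((List.range k).map (fun i => p - (i + 1))).filter (fun s => decide (1 ≤ s))

/-- The spot where a car with preference `p` parks under the `k`-Naples rule. -/
def naplesSpot (n k : ℕ) (occ : Finset ℕ) (p : ℕ) : Option ℕ :=
  if p ∈ occ then
    match (backwardCandidates k p).find? (fun s => decide (s ∉ occ)) with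
    | some s => some s
    | none => forwardSpot n occ p
  else some p

/-- `k`-Naples parking process; returns the final occupied set if all cars park. -/
def naplesPark (n k : ℕ) : List ℕ → Finset ℕ → Option (Finset ℕ)
  | [], occ => some occ
  | p :: rest, occ =>
    match naplesSpot n k occ p with
    | none => none
    | some s => naplesPark n k rest (insert s occ)

/-- All cars park under the `k`-Naples rule and no car with preference `p ≤ k`
finds all of `1, …, p` occupied (no car exits the lot searching backward). -/
def naplesContainedAux (n k : ℕ) : List ℕ → Finset ℕ → Bool
  | [], _ => true
  | p :: rest, occ =>
    (decide (p ≤ k → ¬ Finset.Icc 1 p ⊆ occ)) &&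
    match naplesSpot n k occ p with
    | none => false
    | some s => naplesContainedAux n k rest (insert s occ)

/-- The (1-based) preference list of `a : Fin m → Fin n`. -/
def prefList {m n : ℕ} (a : Fin m → Fin n) : List ℕ :=
  (List.ofFn a).map (fun x => (x : ℕ) + 1)

/-- The set of classical `(m,n)`-parking functions. -/
def PFset (m n : ℕ) : Finset (Fin m → Fin n) :=
  Finset.univ.filter (fun a => (classicalPark n (prefList a) ∅).isSome)

/-- The set of `k`-Naples `(m,n)`-parking functions. -/
def NPFset (m n k : ℕ) : Finset (Fin m → Fin n) :=
  Finset.univ.filter (fun a => (naplesPark n k (prefList a) ∅).isSome)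

/-- The set of contained `k`-Naples `(m,n)`-parking functions. -/
def Bset (m n k : ℕ) : Finset (Fin m → Fin n) :=
  Finset.univ.filter (fun a => naplesContainedAux n k (prefList a) ∅)

/-- The set of `k`-left obstructed `(m,n)`-parking functions: `m` cars on
`n + k` spots whose first `k` spots are obstructed, forward-only rule. -/
def LPFset (m n k : ℕ) : Finset (Fin m → Fin (n + k)) :=
  Finset.univ.filter (fun a => (classicalPark (n + k) (prefList a) (Finset.Icc 1 k)).isSome)

/-- The number of ties (adjacent equal preferences) of a preference sequence. -/
def ties {m n : ℕ} (a : Fin m → Fin n) : ℕ :=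
  (Finset.univ.filter
    (fun j : Fin m => ∃ h : (j : ℕ) + 1 < m, a j = a ⟨(j : ℕ) + 1, h⟩)).card

/-!
Proof idea: add a spot `0` and close the lot `1, …, n` into the circle `ZMod (n + 1)`, where a
car searches as in the `k`-Naples rule but wraps around. On the circle every car parks, and a
preference sequence is a contained `k`-Naples parking function exactly when spot `0` stays free,
because a car that would back up past spot `1` or drive past spot `n` meets spot `0` first.
Translating all preferences by `c` translates the occupied spots by `c`, and ties are translation
invariant; as each of the `(n + 1)^m` sequences leaves `n + 1 - m` spots free, the ties over
sequences leaving `0` free add up to `(n + 1 - m) / (n + 1)` of all ties on the circle, whatever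
`k` is. For `k = 0` these are the classical parking functions.
-/

-- `ties` for sequences in any type; it is evaluated on `ZMod (n + 1)`.
def numTies {m : ℕ} {α : Type*} [DecidableEq α] (a : Fin m → α) : ℕ :=
  (Finset.univ.filter fun j : Fin m => ∃ h : (j : ℕ) + 1 < m, a j = a ⟨(j : ℕ) + 1, h⟩).card

theorem numTies_comp {m : ℕ} {α β : Type*} [DecidableEq α] [DecidableEq β] {f : α → β}
    (hf : Function.Injective f) (a : Fin m → α) : numTies (f ∘ a) = numTies a := by
  simp [numTies, hf.eq_iff]

theorem List.find?_map_append_cons {α β : Type*} {l : List α} {f : α → β} {p : α → Bool}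
    {q : β → Bool} {a : β} (hl : ∀ x ∈ l, q (f x) = p x) (ha : q a = true) (r : List β) :
    (l.map f ++ a :: r).find? q = some (((l.find? p).map f).getD a) := by
  rw [List.find?_append, List.find?_map, List.find?_cons_of_pos ha,
    List.find?_congr (p₁ := q ∘ f) hl]
  cases l.find? p <;> rfl

def naplesSearch (n k p : ℕ) : List ℕ :=
  p :: (backwardCandidates k p ++ List.range' p (n + 1 - p))

def containedSpot (n k : ℕ) (occ : Finset ℕ) (p : ℕ) : Option ℕ :=
  if p ≤ k ∧ Finset.Icc 1 p ⊆ occ then none else naplesSpot n k occ p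

theorem naplesSpot_eq_find? (n k : ℕ) (occ : Finset ℕ) (p : ℕ) :
    naplesSpot n k occ p = (naplesSearch n k p).find? (fun s => decide (s ∉ occ)) := by
  unfold naplesSpot forwardSpot naplesSearch
  by_cases hp : p ∈ occ
  · rw [if_pos hp, List.find?_cons_of_neg (by simpa), List.find?_append]
    cases (backwardCandidates k p).find? _ <;> rfl
  · rw [if_neg hp, List.find?_cons_of_pos (by simpa)]

theorem naplesContainedAux_cons (n k p : ℕ) (rest : List ℕ) (occ : Finset ℕ) :
    naplesContainedAux n k (p :: rest) occ =
      (containedSpot n k occ p).elim false fun s => naplesContainedAux n k rest (insert s occ) := by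
  unfold containedSpot
  by_cases h : p ≤ k ∧ Finset.Icc 1 p ⊆ occ
  · simp [naplesContainedAux, h]
  · rw [naplesContainedAux, if_neg h, decide_eq_true (fun hp => not_and.mp h hp), Bool.true_and]
    cases naplesSpot n k occ p <;> rfl

theorem mem_backwardCandidates {k p s : ℕ} :
    s ∈ backwardCandidates k p ↔ 1 ≤ s ∧ s < p ∧ p ≤ s + k := by
  simp only [backwardCandidates, List.mem_filter, List.mem_map, List.mem_range,
    decide_eq_true_eq]
  constructor
  · rintro ⟨⟨i, hi, rfl⟩, hs⟩
    omega
  · intro h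
    exact ⟨⟨p - s - 1, by omega, by omega⟩, h.1⟩

theorem mem_Icc_of_mem_naplesSearch {n k p s : ℕ} (hp : p ∈ Finset.Icc 1 n)
    (hs : s ∈ naplesSearch n k p) : s ∈ Finset.Icc 1 n := by
  simp only [naplesSearch, List.mem_cons, List.mem_append, mem_backwardCandidates,
    List.mem_range'_1] at hs
  simp only [Finset.mem_Icc] at hp ⊢
  omega

theorem mem_Icc_of_containedSpot_eq_some {n k p s : ℕ} {occ : Finset ℕ}
    (hp : p ∈ Finset.Icc 1 n) (hs : containedSpot n k occ p = some s) : s ∈ Finset.Icc 1 n := by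
  unfold containedSpot at hs
  split_ifs at hs
  rw [naplesSpot_eq_find?] at hs
  exact mem_Icc_of_mem_naplesSearch hp (List.mem_of_find?_eq_some hs)

theorem containedSpot_eq_find?_of_le {n k p : ℕ} (occ : Finset ℕ) (hp : 1 ≤ p) (hpk : p ≤ k) :
    containedSpot n k occ p = (p :: backwardCandidates k p).find? (fun s => decide (s ∉ occ)) := by
  have hmem : ∀ s, s ∈ p :: backwardCandidates k p ↔ s ∈ Finset.Icc 1 p := fun s => by
    simp only [List.mem_cons, mem_backwardCandidates, Finset.mem_Icc]
    omega
  unfold containedSpot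
  split_ifs with hfull
  · exact (List.find?_eq_none.mpr fun s hs => by simpa using hfull.2 ((hmem s).mp hs)).symm
  · obtain ⟨t, ht, hto⟩ := Finset.not_subset.mp fun h => hfull ⟨hpk, h⟩
    rw [naplesSpot_eq_find?, naplesSearch, ← List.cons_append, List.find?_append,
      Option.or_of_isSome]
    exact List.find?_isSome.mpr ⟨t, (hmem t).mpr ht, by simpa using hto⟩

theorem containedSpot_zero {n p : ℕ} (occ : Finset ℕ) (hp : p ∈ Finset.Icc 1 n) :
    containedSpot n 0 occ p = forwardSpot n occ p := by
  obtain ⟨hp1, hpn⟩ := Finset.mem_Icc.mp hp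
  obtain ⟨j, hj⟩ : ∃ j, n + 1 - p = j + 1 := ⟨n - p, by omega⟩
  rw [containedSpot, if_neg (by omega), naplesSpot_eq_find?, naplesSearch, forwardSpot, hj,
    List.range'_succ]
  by_cases h : p ∈ occ <;> simp [backwardCandidates, h]

theorem naplesContainedAux_zero {n : ℕ} (prefs : List ℕ) (occ : Finset ℕ)
    (hprefs : ∀ p ∈ prefs, p ∈ Finset.Icc 1 n) :
    naplesContainedAux n 0 prefs occ = (classicalPark n prefs occ).isSome := by
  induction prefs generalizing occ with
  | nil => rfl
  | cons p rest ih =>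
    rw [naplesContainedAux_cons, containedSpot_zero occ (hprefs p List.mem_cons_self),
      classicalPark]
    cases forwardSpot n occ p with
    | none => rfl
    | some s => exact ih _ fun q hq => hprefs q (List.mem_cons_of_mem p hq)

theorem prefList_eq_ofFn {m n : ℕ} (a : Fin m → Fin n) :
    prefList a = List.ofFn fun i => (a i : ℕ) + 1 := by
  simp only [prefList, List.pure_def, List.bind_eq_flatMap, ← List.map_eq_flatMap, List.map_ofFn,
    List.ofFn_inj]
  rfl

theorem mem_Icc_of_mem_prefList {m n p : ℕ} {a : Fin m → Fin n} (hp : p ∈ prefList a) :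
    p ∈ Finset.Icc 1 n := by
  obtain ⟨i, rfl⟩ := List.mem_ofFn.mp (prefList_eq_ofFn a ▸ hp)
  exact Finset.mem_Icc.mpr ⟨Nat.le_add_left _ _, (a i).isLt⟩

theorem PFset_eq_Bset_zero (m n : ℕ) : PFset m n = Bset m n 0 := by
  ext a
  simp only [PFset, Bset, Finset.mem_filter,
    naplesContainedAux_zero _ _ fun p => mem_Icc_of_mem_prefList]

section Circular

-- The forward sweep starts again at `p`, as `forwardSpot` does.
def circCandidates (k N : ℕ) (p : ZMod N) : List (ZMod N) :=
  p :: ((List.range k).map (fun i : ℕ => p - (i + 1)) ++ (List.range N).map (fun i : ℕ => p + i))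

-- The fallback `p` only matters on a full lot; it makes `circSpot_add` unconditional.
def circSpot (k : ℕ) {N : ℕ} (occ : Finset (ZMod N)) (p : ZMod N) : ZMod N :=
  ((circCandidates k N p).find? (fun s => decide (s ∉ occ))).getD p

def circPark (k : ℕ) {N : ℕ} : List (ZMod N) → Finset (ZMod N) → Finset (ZMod N)
  | [], occ => occ
  | p :: rest, occ => circPark k rest (insert (circSpot k occ p) occ)

variable {k N : ℕ}

theorem circCandidates_add (p c : ZMod N) :
    circCandidates k N (p + c) = (circCandidates k N p).map (· + c) := by
  simp only [circCandidates, List.map_cons, List.map_append, List.map_map]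
  congr 2 <;> refine List.map_congr_left fun i _ => ?_ <;> simp only [Function.comp_apply] <;> ring

theorem circSpot_add (occ : Finset (ZMod N)) (p c : ZMod N) :
    circSpot k (occ.image (· + c)) (p + c) = circSpot k occ p + c := by
  have hfree : (fun s => decide (s ∉ occ.image (· + c))) ∘ (· + c) =
      fun s => decide (s ∉ occ) := by
    funext s
    simp
  rw [circSpot, circCandidates_add, List.find?_map, hfree, Option.getD_map]
  rfl

theorem circPark_add (l : List (ZMod N)) (occ : Finset (ZMod N)) (c : ZMod N) :
    circPark k (l.map (· + c)) (occ.image (· + c)) = (circPark k l occ).image (· + c) := by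
  induction l generalizing occ with
  | nil => rfl
  | cons p rest ih =>
    rw [List.map_cons, circPark, circPark, circSpot_add, ← ih, Finset.image_insert]

theorem subset_circPark (l : List (ZMod N)) (occ : Finset (ZMod N)) :
    occ ⊆ circPark k l occ := by
  induction l generalizing occ with
  | nil => exact subset_rfl
  | cons p rest ih => exact (Finset.subset_insert _ _).trans (ih _)

theorem mem_circPark_of_mem {x : ZMod N} {l : List (ZMod N)} (hx : x ∈ l)
    (occ : Finset (ZMod N)) : x ∈ circPark k l occ := by
  induction l generalizing occ with
  | nil => simp at hx
  | cons p rest ih =>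
    rcases List.mem_cons.mp hx with rfl | hx
    · apply subset_circPark rest
      by_cases hocc : x ∈ occ
      · exact Finset.mem_insert_of_mem hocc
      · simp [circSpot, circCandidates, hocc]
    · exact ih hx _

variable [NeZero N]

theorem mem_circCandidates (p s : ZMod N) : s ∈ circCandidates k N p := by
  refine List.mem_cons_of_mem _ (List.mem_append_right _ (List.mem_map.mpr ?_))
  exact ⟨(s - p).val, List.mem_range.mpr (ZMod.val_lt _), by simp⟩

theorem circSpot_notMem {occ : Finset (ZMod N)} (h : occ ≠ Finset.univ) (p : ZMod N) :
    circSpot k occ p ∉ occ := by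
  obtain ⟨s, hs⟩ := not_forall.mp (mt Finset.eq_univ_iff_forall.mpr h)
  obtain ⟨t, ht⟩ := Option.isSome_iff_exists.mp <|
    List.find?_isSome (p := fun s => decide (s ∉ occ)).mpr
      ⟨s, mem_circCandidates (k := k) p s, by simpa using hs⟩
  rw [circSpot, ht, Option.getD_some]
  simpa using List.find?_some ht

theorem card_circPark (l : List (ZMod N)) (occ : Finset (ZMod N)) (h : occ.card + l.length ≤ N) :
    (circPark k l occ).card = occ.card + l.length := by
  induction l generalizing occ with
  | nil => rfl
  | cons p rest ih =>
    have hne : occ ≠ Finset.univ := by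
      rintro rfl
      simp [Finset.card_univ, ZMod.card] at h
    have hins := Finset.card_insert_of_notMem (circSpot_notMem (k := k) hne p)
    rw [circPark, ih _ (by simp only [List.length_cons] at h; omega), hins, List.length_cons]
    ring

open Finset in
theorem mul_sum_filter_zero_notMem_circPark (k : ℕ) {m : ℕ} (hm : m ≤ N)
    (w : (Fin m → ZMod N) → ℕ) (hw : ∀ g c, w (g + fun _ => c) = w g) :
    N * ∑ g with (0 : ZMod N) ∉ circPark k (List.ofFn g) ∅, w g =
      (N - m) * ∑ g, w g := by
  set P := fun g : Fin m → ZMod N => circPark k (List.ofFn g) ∅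
  have hshift : ∀ g c, P (g + fun _ => c) = (P g).image (· + c) := by
    intro g c
    simp only [P]
    rw [← image_empty (· + c), ← circPark_add, List.map_ofFn]
    rfl
  have hfree : ∀ c, ∑ g with 0 ∉ P g, w g = ∑ g with c ∉ P g, w g := by
    intro c
    simp only [sum_filter]
    refine Fintype.sum_equiv (Equiv.addRight fun _ => c) _ _ fun g => ?_
    simp [hshift, hw]
  have hcount : ∀ g, #{c | c ∉ P g} = N - m := by
    intro g
    rw [filter_notMem_eq_sdiff, card_univ_sdiff, ZMod.card, card_circPark _ _ (by simpa using hm)]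
    simp
  calc N * ∑ g with 0 ∉ P g, w g = ∑ c : ZMod N, ∑ g with c ∉ P g, w g := by
        rw [sum_congr rfl fun c _ => (hfree c).symm, sum_const, card_univ, ZMod.card,
          smul_eq_mul]
    _ = ∑ g, ∑ c with c ∉ P g, w g := by
        simp only [sum_filter]
        exact sum_comm
    _ = (N - m) * ∑ g, w g := by
        simp only [sum_const, hcount, smul_eq_mul, mul_sum]

end Circular

theorem natCast_mem_image_natCast_iff {n s : ℕ} {occ : Finset ℕ} (hocc : occ ⊆ Finset.Icc 1 n)
    (hs : s ≤ n) : (s : ZMod (n + 1)) ∈ occ.image Nat.cast ↔ s ∈ occ := by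
  refine ⟨fun h => ?_, Finset.mem_image_of_mem _⟩
  obtain ⟨t, ht, hts⟩ := Finset.mem_image.mp h
  have htn := (Finset.mem_Icc.mp (hocc ht)).2
  rw [ZMod.natCast_eq_natCast_iff', Nat.mod_eq_of_lt (by omega), Nat.mod_eq_of_lt (by omega)]
    at hts
  exact hts ▸ ht

theorem zero_notMem_image_natCast {n : ℕ} {occ : Finset ℕ} (hocc : occ ⊆ Finset.Icc 1 n) :
    (0 : ZMod (n + 1)) ∉ occ.image Nat.cast := by
  rw [← Nat.cast_zero, natCast_mem_image_natCast_iff hocc (Nat.zero_le n)]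
  exact fun h => by simpa using hocc h

theorem backwardCandidates_cast_of_lt {N k p : ℕ} (hkp : k < p) :
    (List.range k).map (fun i : ℕ => (p : ZMod N) - (i + 1)) =
      (backwardCandidates k p).map Nat.cast := by
  rw [backwardCandidates, List.filter_eq_self.mpr, List.map_map]
  · refine List.map_congr_left fun i hi => ?_
    rw [List.mem_range] at hi
    simp [Nat.cast_sub (show i + 1 ≤ p by omega)]
  · simp only [List.mem_map, List.mem_range, decide_eq_true_eq]
    omega

theorem exists_backwardCandidates_cast_of_le {N k p : ℕ} (hp : 1 ≤ p) (hpk : p ≤ k) :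
    ∃ rest, (List.range k).map (fun i : ℕ => (p : ZMod N) - (i + 1)) =
      (backwardCandidates k p).map Nat.cast ++ 0 :: rest := by
  obtain ⟨j, rfl⟩ : ∃ j, k = (p - 1) + (j + 1) := ⟨k - p, by omega⟩
  rw [backwardCandidates, List.range_add, List.range_succ_eq_map]
  simp only [List.map_append, List.filter_append, List.map_cons]
  rw [List.filter_eq_self.mpr, List.filter_eq_nil_iff.mpr, List.map_nil, List.append_nil]
  · simp only [List.map_map]
    refine ⟨_, congrArg₂ _ (List.map_congr_left fun i hi => ?_) (congrArg₂ _ ?_ rfl)⟩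
    · rw [List.mem_range] at hi
      simp [Nat.cast_sub (show i + 1 ≤ p by omega)]
    · rw [add_zero, ← Nat.cast_succ, Nat.succ_eq_add_one, Nat.sub_add_cancel hp, sub_self]
  · simp only [List.mem_cons, List.mem_map, List.mem_range, decide_eq_true_eq]
    omega
  · simp only [List.mem_map, List.mem_range, decide_eq_true_eq]
    omega

theorem exists_forward_cast {n p : ℕ} (hp : 1 ≤ p) (hpn : p ≤ n) :
    ∃ rest, (List.range (n + 1)).map (fun i : ℕ => (p : ZMod (n + 1)) + i) =
      (List.range' p (n + 1 - p)).map Nat.cast ++ 0 :: rest := by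
  have hr : List.range (n + 1) = List.range (n + 1 - p) ++
      (0 :: (List.range (p - 1)).map Nat.succ).map (n + 1 - p + ·) := by
    rw [← List.range_succ_eq_map, ← List.range_add]
    congr 1
    omega
  rw [hr, List.range'_eq_map_range]
  simp only [List.map_append, List.map_cons, List.map_map]
  refine ⟨_, congrArg₂ _ (List.map_congr_left fun i _ => by simp) (congrArg₂ _ ?_ rfl)⟩
  rw [add_zero, ← Nat.cast_add, Nat.add_sub_cancel' (by omega), ZMod.natCast_self]

/-- Placing the lot `1, …, n` on the circle `ZMod (n + 1)`, a car that would leave the lot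
(backward past spot `1`, or forward past spot `n`) reaches the extra spot `0` first. -/
theorem circSpot_natCast {n k p : ℕ} {occ : Finset ℕ} (hocc : occ ⊆ Finset.Icc 1 n)
    (hp : p ∈ Finset.Icc 1 n) :
    circSpot k (occ.image Nat.cast) (p : ZMod (n + 1)) =
      ((containedSpot n k occ p).map Nat.cast).getD 0 := by
  obtain ⟨hp1, hpn⟩ := Finset.mem_Icc.mp hp
  set q := fun s : ℕ => decide (s ∉ occ)
  set Q := fun x : ZMod (n + 1) => decide (x ∉ occ.image Nat.cast)
  have hq : ∀ s ∈ naplesSearch n k p, Q s = q s := fun s hs => by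
    simp only [Q, q, natCast_mem_image_natCast_iff hocc
      (Finset.mem_Icc.mp (mem_Icc_of_mem_naplesSearch hp hs)).2]
  have h0 : Q 0 = true := decide_eq_true (zero_notMem_image_natCast hocc)
  obtain ⟨fwd, hfwd⟩ := exists_forward_cast hp1 hpn
  unfold circSpot circCandidates
  rw [hfwd]
  rcases lt_or_ge k p with hkp | hpk
  · rw [backwardCandidates_cast_of_lt hkp, containedSpot, if_neg (by omega), naplesSpot_eq_find?,
      show ((p : ZMod (n + 1)) :: ((backwardCandidates k p).map Nat.cast ++
        ((List.range' p (n + 1 - p)).map Nat.cast ++ 0 :: fwd))) =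
        (naplesSearch n k p).map Nat.cast ++ 0 :: fwd
        by simp [naplesSearch], List.find?_map_append_cons hq h0]
    rfl
  · obtain ⟨bwd, hbwd⟩ := exists_backwardCandidates_cast_of_le (N := n + 1) hp1 hpk
    rw [hbwd, show ((p : ZMod (n + 1)) :: ((backwardCandidates k p).map Nat.cast ++ 0 :: bwd ++
        ((List.range' p (n + 1 - p)).map Nat.cast ++ 0 :: fwd))) =
        (p :: backwardCandidates k p).map Nat.cast ++
          0 :: (bwd ++ ((List.range' p (n + 1 - p)).map Nat.cast ++ 0 :: fwd)) by simp,
      List.find?_map_append_cons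
        (fun s hs => hq s (List.cons_subset_cons p (List.subset_append_left _ _) hs)) h0,
      Option.getD_some, containedSpot_eq_find?_of_le occ hp1 hpk]

theorem zero_notMem_circPark_iff {n k : ℕ} (prefs : List ℕ) {occ : Finset ℕ}
    (hocc : occ ⊆ Finset.Icc 1 n) (hprefs : ∀ p ∈ prefs, p ∈ Finset.Icc 1 n) :
    (0 : ZMod (n + 1)) ∉ circPark k (prefs.map Nat.cast) (occ.image Nat.cast) ↔
      naplesContainedAux n k prefs occ = true := by
  induction prefs generalizing occ with
  | nil => simpa [circPark, naplesContainedAux] using zero_notMem_image_natCast hocc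
  | cons p rest ih =>
    have hp := hprefs p List.mem_cons_self
    rw [List.map_cons, circPark, circSpot_natCast hocc hp, naplesContainedAux_cons]
    cases hs : containedSpot n k occ p with
    | none =>
      exact iff_of_false (fun h => h (subset_circPark _ _ (Finset.mem_insert_self _ _)))
        Bool.false_ne_true
    | some s =>
      rw [Option.map_some, Option.getD_some, Option.elim_some, ← Finset.image_insert]
      exact ih (Finset.insert_subset (mem_Icc_of_containedSpot_eq_some hp hs) hocc)
        fun q hq => hprefs q (List.mem_cons_of_mem p hq)

def shiftCast (n : ℕ) (x : Fin n) : ZMod (n + 1) := ((x : ℕ) + 1 : ℕ)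

theorem shiftCast_injective (n : ℕ) : Function.Injective (shiftCast n) := by
  intro x y h
  rw [shiftCast, shiftCast, ZMod.natCast_eq_natCast_iff', Nat.mod_eq_of_lt (by omega),
    Nat.mod_eq_of_lt (by omega)] at h
  exact Fin.ext (by omega)

theorem exists_shiftCast_eq {n : ℕ} {z : ZMod (n + 1)} (hz : z ≠ 0) : ∃ x, shiftCast n x = z := by
  have hpos : z.val ≠ 0 := (ZMod.val_ne_zero z).mpr hz
  refine ⟨⟨z.val - 1, by have := ZMod.val_lt z; omega⟩, ?_⟩
  rw [shiftCast, Nat.sub_add_cancel (Nat.pos_of_ne_zero hpos), ZMod.natCast_zmod_val]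

theorem prefList_map_natCast {m n : ℕ} (a : Fin m → Fin n) :
    (prefList a).map Nat.cast = List.ofFn (shiftCast n ∘ a) := by
  rw [prefList_eq_ofFn, List.map_ofFn]
  rfl

theorem mem_Bset_iff {m n k : ℕ} (a : Fin m → Fin n) :
    a ∈ Bset m n k ↔ (0 : ZMod (n + 1)) ∉ circPark k (List.ofFn (shiftCast n ∘ a)) ∅ := by
  rw [Bset, Finset.mem_filter, ← prefList_map_natCast,
    ← Finset.image_empty (Nat.cast : ℕ → ZMod (n + 1)),
    zero_notMem_circPark_iff _ (Finset.empty_subset _) fun p => mem_Icc_of_mem_prefList]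
  simp

theorem sum_Bset_eq_sum_zero_notMem_circPark {m n k : ℕ} (w : (Fin m → ZMod (n + 1)) → ℕ) :
    ∑ a ∈ Bset m n k, w (shiftCast n ∘ a) =
      ∑ g with (0 : ZMod (n + 1)) ∉ circPark k (List.ofFn g) ∅, w g := by
  refine Finset.sum_nbij (shiftCast n ∘ ·) (fun a ha => by simpa using (mem_Bset_iff a).mp ha)
    (fun a _ b _ h => (shiftCast_injective n).comp_left h) (fun g hg => ?_) fun _ _ => rfl
  have hg : (0 : ZMod (n + 1)) ∉ circPark k (List.ofFn g) ∅ := by simpa using hg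
  choose a ha using fun i => exists_shiftCast_eq fun h0 =>
    hg (mem_circPark_of_mem (List.mem_ofFn.mpr ⟨i, h0⟩) _)
  have hag : shiftCast n ∘ a = g := funext ha
  exact ⟨a, (mem_Bset_iff a).mpr (hag ▸ hg), hag⟩

theorem sum_Bset_eq_sum_PFset {m n k : ℕ} (hmn : m ≤ n) (w : (Fin m → ZMod (n + 1)) → ℕ)
    (hw : ∀ g c, w (g + fun _ => c) = w g) :
    ∑ a ∈ Bset m n k, w (shiftCast n ∘ a) = ∑ a ∈ PFset m n, w (shiftCast n ∘ a) := by
  rw [PFset_eq_Bset_zero]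
  refine Nat.eq_of_mul_eq_mul_left (Nat.succ_pos n) ?_
  rw [sum_Bset_eq_sum_zero_notMem_circPark, sum_Bset_eq_sum_zero_notMem_circPark,
    mul_sum_filter_zero_notMem_circPark k (by omega) w hw,
    mul_sum_filter_zero_notMem_circPark 0 (by omega) w hw]

theorem ties_equal_general (m n k : ℕ) (hmn : m ≤ n) :
    ∑ f ∈ Bset m n k, ties f = ∑ g ∈ PFset m n, ties g := by
  have hties : ∀ a : Fin m → Fin n, ties a = numTies (shiftCast n ∘ a) :=
    fun a => (numTies_comp (shiftCast_injective n) a).symm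
  simp only [hties]
  exact sum_Bset_eq_sum_PFset hmn numTies fun g c => numTies_comp (add_left_injective c) g

theorem ties_equal (m n k : ℕ) (hm : 1 ≤ m) (hmn : m ≤ n) (hk : k ≤ n - 1) :
    ∑ f ∈ Bset m n k, ties f = ∑ g ∈ PFset m n, ties g :=
  ties_equal_general m n k hmn
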